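/- Converse boundedness (Zermelo's 1927 argument): in a finite-position alternating game, if from position p₀ White cannot win within any fixed bound n (i.e., for every n, Black can avoid the target for n moves), then Black can avoid the target forever, i.e., White cannot force a win from p₀ at all. -/

import Mathlib

/-- A reachability game: a digraph on `V` with Player 0's vertices `V0`
(Player 1 owns the complement), edge relation `E`, and target set `F`.
Player 0 wins a play iff it visits `F`. -/
structure RGame (V : Type*) where
  V0 : Set V
  E : V → V → Prop
  F : Set V

namespace RGame

variable {V : Type*}

/-- `v` has at least one successor. -/
def hasSucc (g : RGame V) (v : V) : Prop := ∃ u, g.E v u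

/-- A (possibly finite) play, encoded as `p : ℕ → Option V`: once `none`, always `none`;
the play stops exactly at dead-ends, and consecutive positions are joined by edges. -/
def IsPlay (g : RGame V) (p : ℕ → Option V) : Prop :=
  ∀ n, (p n = none → p (n + 1) = none) ∧
    ∀ w, p n = some w →
      ((¬g.hasSucc w → p (n + 1) = none) ∧
       (g.hasSucc w → ∃ u, p (n + 1) = some u) ∧
       (∀ u, p (n + 1) = some u → g.E w u))

/-- The history (list of positions) of the play up to and including time `n`. -/
def histUpTo (p : ℕ → Option V) (n : ℕ) : List V :=
  (List.range (n + 1)).filterMap p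

/-- Legality of a (history-dependent) strategy: it always chooses an edge-successor
of the current vertex whenever one exists. -/
def LegalStrat (g : RGame V) (σ : V → List V → V) : Prop :=
  ∀ w h, g.hasSucc w → g.E w (σ w h)

/-- The play `p` is consistent with Player 0 using strategy `σ`. -/
def Cons0 (g : RGame V) (σ : V → List V → V) (p : ℕ → Option V) : Prop :=
  ∀ n w, p n = some w → w ∈ g.V0 → g.hasSucc w → p (n + 1) = some (σ w (histUpTo p n))

/-- The play `p` is consistent with Player 1 using strategy `τ`. -/
def Cons1 (g : RGame V) (τ : V → List V → V) (p : ℕ → Option V) : Prop :=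
  ∀ n w, p n = some w → w ∉ g.V0 → g.hasSucc w → p (n + 1) = some (τ w (histUpTo p n))

/-- Legality of a memoryless strategy. -/
def LegalStratM (g : RGame V) (σ : V → V) : Prop :=
  ∀ w, g.hasSucc w → g.E w (σ w)

/-- Consistency of a play with Player 0 using a memoryless strategy. -/
def Cons0M (g : RGame V) (σ : V → V) (p : ℕ → Option V) : Prop :=
  ∀ n w, p n = some w → w ∈ g.V0 → g.hasSucc w → p (n + 1) = some (σ w)

/-- Consistency of a play with Player 1 using a memoryless strategy. -/
def Cons1M (g : RGame V) (τ : V → V) (p : ℕ → Option V) : Prop :=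
  ∀ n w, p n = some w → w ∉ g.V0 → g.hasSucc w → p (n + 1) = some (τ w)

/-- The play visits the target set `F`. -/
def Visits (g : RGame V) (p : ℕ → Option V) : Prop :=
  ∃ n w, p n = some w ∧ w ∈ g.F

/-- Player 0 has a winning strategy from `v`: some legal strategy forcing every
consistent play starting at `v` to visit `F`. -/
def Win0From (g : RGame V) (v : V) : Prop :=
  ∃ σ : V → List V → V, g.LegalStrat σ ∧
    ∀ p : ℕ → Option V, g.IsPlay p → p 0 = some v → g.Cons0 σ p → g.Visits p

/-- Player 1 has a winning strategy from `v`: some legal strategy such that no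
consistent play starting at `v` ever visits `F`. -/
def Win1From (g : RGame V) (v : V) : Prop :=
  ∃ τ : V → List V → V, g.LegalStrat τ ∧
    ∀ p : ℕ → Option V, g.IsPlay p → p 0 = some v → g.Cons1 τ p → ¬g.Visits p

/-- The attractor sets: `attr 0 = F`, and `attr (n+1)` additionally contains the
Player-0 vertices with some successor in `attr n` and the Player-1 vertices having
a successor and all successors in `attr n`. -/
def attr (g : RGame V) : ℕ → Set V
  | 0 => g.F
  | n + 1 =>
      g.attr n ∪ {v | v ∈ g.V0 ∧ ∃ u, g.E v u ∧ u ∈ g.attr n}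
        ∪ {v | v ∉ g.V0 ∧ g.hasSucc v ∧ ∀ u, g.E v u → u ∈ g.attr n}

end RGame

/-! The attractor levels `attr n` increase, so on a finite `V` they stabilise at some
`attr N = attr (N + 1)`. From a position in `attr n` White wins within `n` moves by always
moving to a successor of least level, hence `p₀ ∉ attr N`. Stability makes the complement of
`attr N` a trap: every White move stays in it and Black can always stay in it. It misses `F`,
so Black keeps any play from `p₀` inside it whatever strategy White uses. -/

namespace RGame

variable {V : Type*} (g : RGame V)

def Win0Within (v : V) (n : ℕ) : Prop :=
  ∃ σ : V → List V → V, g.LegalStrat σ ∧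
    ∀ p : ℕ → Option V, g.IsPlay p → p 0 = some v → g.Cons0 σ p →
      ∃ m ≤ n, ∃ w, p m = some w ∧ w ∈ g.F

/-- A set in which Black can keep the play. -/
def IsTrap (T : Set V) : Prop :=
  (∀ w ∈ T, w ∈ g.V0 → ∀ u, g.E w u → u ∈ T) ∧
    ∀ w ∈ T, w ∉ g.V0 → g.hasSucc w → ∃ u, g.E w u ∧ u ∈ T

section Attractor

lemma mem_attr_succ {v : V} {n : ℕ} :
    v ∈ g.attr (n + 1) ↔ (v ∈ g.attr n ∨ v ∈ g.V0 ∧ ∃ u, g.E v u ∧ u ∈ g.attr n) ∨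
      v ∉ g.V0 ∧ g.hasSucc v ∧ ∀ u, g.E v u → u ∈ g.attr n :=
  Iff.rfl

lemma attr_mono : Monotone g.attr :=
  monotone_nat_of_le_succ fun _ _ hv => g.mem_attr_succ.2 (Or.inl (Or.inl hv))

lemma F_subset_attr (n : ℕ) : g.F ⊆ g.attr n :=
  g.attr_mono n.zero_le

lemma exists_attr_succ_eq [Finite V] : ∃ N, g.attr (N + 1) = g.attr N := by
  obtain ⟨N, hN⟩ := WellFoundedGT.monotone_chain_condition ⟨g.attr, g.attr_mono⟩
  exact ⟨N, (hN (N + 1) N.le_succ).symm⟩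

lemma isTrap_compl_attr {N : ℕ} (hN : g.attr (N + 1) = g.attr N) : g.IsTrap (g.attr N)ᶜ := by
  refine ⟨fun w hw hV0 u hu huA => hw ?_, fun w hw hV0 hs => ?_⟩
  · rw [← hN]
    exact g.mem_attr_succ.2 (Or.inl (Or.inr ⟨hV0, u, hu, huA⟩))
  · by_contra! hall
    rw [← hN] at hw
    exact hw (g.mem_attr_succ.2 (Or.inr ⟨hV0, hs, fun u hu => Set.notMem_compl_iff.1 (hall u hu)⟩))

lemma exists_attr_strategy :
    ∃ σ : V → V, g.LegalStratM σ ∧ ∀ v n u, g.E v u → u ∈ g.attr n → σ v ∈ g.attr n := by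
  have hmove : ∀ v, ∃ u, (g.hasSucc v → g.E v u) ∧
      ∀ n u', g.E v u' → u' ∈ g.attr n → u ∈ g.attr n := by
    intro v
    by_cases hex : ∃ n u, g.E v u ∧ u ∈ g.attr n
    · classical
      obtain ⟨u, hu, huA⟩ := Nat.find_spec hex
      exact ⟨u, fun _ => hu, fun n u' hu' hu'A =>
        g.attr_mono (Nat.find_min' hex ⟨u', hu', hu'A⟩) huA⟩
    · push Not at hex
      by_cases hs : g.hasSucc v
      · obtain ⟨u, hu⟩ := hs
        exact ⟨u, fun _ => hu, fun n u' hu' h => absurd h (hex n u' hu')⟩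
      · exact ⟨v, fun h => absurd h hs, fun n u' hu' h => absurd h (hex n u' hu')⟩
  choose σ hσ using hmove
  exact ⟨σ, fun v => (hσ v).1, fun v => (hσ v).2⟩

lemma attr_forces {σ : V → V} (hσ : ∀ v n u, g.E v u → u ∈ g.attr n → σ v ∈ g.attr n)
    {p : ℕ → Option V} (hp : g.IsPlay p) (hc : g.Cons0 (fun w _ => σ w) p) (n : ℕ) :
    ∀ t v, p t = some v → v ∈ g.attr n → ∃ m ≤ n, ∃ w, p (t + m) = some w ∧ w ∈ g.F := by
  induction n with
  | zero => exact fun t v hv hF => ⟨0, le_rfl, v, hv, hF⟩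
  | succ n ih =>
    intro t v hv hvA
    have ih' : ∀ u, p (t + 1) = some u → u ∈ g.attr n →
        ∃ m ≤ n + 1, ∃ w, p (t + m) = some w ∧ w ∈ g.F := fun u hu huA => by
      obtain ⟨m, hm, w, hw, hwF⟩ := ih (t + 1) u hu huA
      exact ⟨m + 1, by omega, w, by rwa [← add_assoc, add_right_comm], hwF⟩
    rcases g.mem_attr_succ.1 hvA with (hvA | ⟨hV0, u, hu, huA⟩) | ⟨-, hs, hall⟩
    · obtain ⟨m, hm, w, hw, hwF⟩ := ih t v hv hvA
      exact ⟨m, hm.trans n.le_succ, w, hw, hwF⟩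
    · exact ih' _ (hc t v hv hV0 ⟨u, hu⟩) (hσ v n u hu huA)
    · obtain ⟨u, hu⟩ := ((hp t).2 v hv).2.1 hs
      exact ih' u hu (hall u (((hp t).2 v hv).2.2 u hu))

lemma win0Within_of_mem_attr {v : V} {n : ℕ} (hv : v ∈ g.attr n) : g.Win0Within v n := by
  obtain ⟨σ, hlegal, hσ⟩ := g.exists_attr_strategy
  refine ⟨fun w _ => σ w, fun w _ => hlegal w, fun p hp hp0 hc => ?_⟩
  simpa using g.attr_forces hσ hp hc n 0 v hp0 hv

end Attractor

section Outcome

variable (σ τ : V → List V → V)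

open scoped Classical in
/-- The state is the current position (`none` once the play has ended) and the history. -/
noncomputable def playStep : Option V × List V → Option V × List V
  | (some w, h) =>
    if g.hasSucc w then
      let u := if w ∈ g.V0 then σ w h else τ w h
      (some u, h ++ [u])
    else (none, h)
  | (none, h) => (none, h)

noncomputable def outcome (v : V) (n : ℕ) : Option V :=
  ((g.playStep σ τ)^[n] (some v, [v])).1

lemma playStep_snd (x : Option V × List V) :
    (g.playStep σ τ x).2 = x.2 ++ (g.playStep σ τ x).1.toList := by
  rcases x with ⟨_ | w, h⟩
  · simp [playStep]
  · by_cases hs : g.hasSucc w <;> simp [playStep, hs]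

lemma histUpTo_succ (p : ℕ → Option V) (n : ℕ) :
    histUpTo p (n + 1) = histUpTo p n ++ (p (n + 1)).toList := by
  unfold histUpTo
  rw [List.range_succ, List.filterMap_append]
  cases hp : p (n + 1) <;> simp [hp]

lemma iterate_playStep (v : V) (n : ℕ) :
    (g.playStep σ τ)^[n] (some v, [v]) = (g.outcome σ τ v n, histUpTo (g.outcome σ τ v) n) := by
  induction n with
  | zero => rfl
  | succ n ih =>
    refine Prod.ext rfl ?_
    have h := g.playStep_snd σ τ ((g.playStep σ τ)^[n] (some v, [v]))
    rw [← Function.iterate_succ_apply' (g.playStep σ τ)] at h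
    rw [h, ih, histUpTo_succ]
    rfl

lemma outcome_succ (v : V) (n : ℕ) :
    g.outcome σ τ v (n + 1) =
      (g.playStep σ τ (g.outcome σ τ v n, histUpTo (g.outcome σ τ v) n)).1 := by
  rw [← iterate_playStep, outcome, Function.iterate_succ_apply']

lemma outcome_succ_of_mem_V0 {v w : V} {n : ℕ} (hw : g.outcome σ τ v n = some w)
    (hs : g.hasSucc w) (hV0 : w ∈ g.V0) :
    g.outcome σ τ v (n + 1) = some (σ w (histUpTo (g.outcome σ τ v) n)) := by
  simp [outcome_succ, hw, playStep, hs, hV0]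

lemma outcome_succ_of_notMem_V0 {v w : V} {n : ℕ} (hw : g.outcome σ τ v n = some w)
    (hs : g.hasSucc w) (hV0 : w ∉ g.V0) :
    g.outcome σ τ v (n + 1) = some (τ w (histUpTo (g.outcome σ τ v) n)) := by
  simp [outcome_succ, hw, playStep, hs, hV0]

lemma outcome_succ_of_not_hasSucc {v w : V} {n : ℕ} (hw : g.outcome σ τ v n = some w)
    (hs : ¬g.hasSucc w) : g.outcome σ τ v (n + 1) = none := by
  simp [outcome_succ, hw, playStep, hs]

lemma outcome_succ_of_none {v : V} {n : ℕ} (hn : g.outcome σ τ v n = none) :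
    g.outcome σ τ v (n + 1) = none := by
  simp [outcome_succ, hn, playStep]

variable {σ τ}

lemma outcome_succ_eq_some_iff {v w u : V} {n : ℕ} (hw : g.outcome σ τ v n = some w) :
    g.outcome σ τ v (n + 1) = some u ↔ g.hasSucc w ∧
      (w ∈ g.V0 → u = σ w (histUpTo (g.outcome σ τ v) n)) ∧
      (w ∉ g.V0 → u = τ w (histUpTo (g.outcome σ τ v) n)) := by
  by_cases hs : g.hasSucc w
  · by_cases hV0 : w ∈ g.V0
    · simp [g.outcome_succ_of_mem_V0 σ τ hw hs hV0, hs, hV0, eq_comm]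
    · simp [g.outcome_succ_of_notMem_V0 σ τ hw hs hV0, hs, hV0, eq_comm]
  · simp [g.outcome_succ_of_not_hasSucc σ τ hw hs, hs]

lemma isPlay_outcome (hσ : g.LegalStrat σ) (hτ : g.LegalStrat τ) (v : V) :
    g.IsPlay (g.outcome σ τ v) := by
  refine fun n => ⟨g.outcome_succ_of_none σ τ, fun w hw => ⟨g.outcome_succ_of_not_hasSucc σ τ hw,
    fun hs => ?_, fun u hu => ?_⟩⟩
  · by_cases hV0 : w ∈ g.V0
    exacts [⟨_, g.outcome_succ_of_mem_V0 σ τ hw hs hV0⟩,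
      ⟨_, g.outcome_succ_of_notMem_V0 σ τ hw hs hV0⟩]
  · obtain ⟨hs, hσu, hτu⟩ := (g.outcome_succ_eq_some_iff hw).1 hu
    by_cases hV0 : w ∈ g.V0
    exacts [hσu hV0 ▸ hσ w _ hs, hτu hV0 ▸ hτ w _ hs]

lemma cons0_outcome (v : V) : g.Cons0 σ (g.outcome σ τ v) := fun _ _ hw hs hV0 =>
  g.outcome_succ_of_mem_V0 σ τ hw hV0 hs

lemma outcome_mem_of_isTrap {T : Set V} (hT : g.IsTrap T)
    (hτ : ∀ w ∈ T, w ∉ g.V0 → g.hasSucc w → ∀ h, τ w h ∈ T) (hσ : g.LegalStrat σ)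
    {v : V} (hv : v ∈ T) : ∀ n w, g.outcome σ τ v n = some w → w ∈ T := by
  intro n
  induction n with
  | zero => rintro w ⟨⟩; exact hv
  | succ n ih =>
    intro u hu
    rcases hn : g.outcome σ τ v n with _ | w
    · simp [g.outcome_succ_of_none σ τ hn] at hu
    · obtain ⟨hs, hσu, hτu⟩ := (g.outcome_succ_eq_some_iff hn).1 hu
      by_cases hV0 : w ∈ g.V0
      exacts [hσu hV0 ▸ hT.1 w (ih w hn) hV0 _ (hσ w _ hs), hτu hV0 ▸ hτ w (ih w hn) hV0 hs _]

end Outcome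

lemma IsTrap.exists_strategy {T : Set V} (hT : g.IsTrap T) :
    ∃ τ : V → V, g.LegalStratM τ ∧ ∀ w ∈ T, w ∉ g.V0 → g.hasSucc w → τ w ∈ T := by
  have hmove : ∀ w, ∃ u, (g.hasSucc w → g.E w u) ∧ (w ∈ T → w ∉ g.V0 → g.hasSucc w → u ∈ T) := by
    intro w
    by_cases hs : g.hasSucc w
    · by_cases hstay : w ∈ T ∧ w ∉ g.V0
      · obtain ⟨u, hu, huT⟩ := hT.2 w hstay.1 hstay.2 hs
        exact ⟨u, fun _ => hu, fun _ _ _ => huT⟩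
      · obtain ⟨u, hu⟩ := hs
        exact ⟨u, fun _ => hu, fun hwT hV0 _ => absurd ⟨hwT, hV0⟩ hstay⟩
    · exact ⟨w, fun h => absurd h hs, fun _ _ h => absurd h hs⟩
  choose τ hτ using hmove
  exact ⟨τ, fun w => (hτ w).1, fun w => (hτ w).2⟩

lemma not_win0From_of_isTrap {T : Set V} (hT : g.IsTrap T) (hTF : Disjoint T g.F) {v : V}
    (hv : v ∈ T) : ¬g.Win0From v := by
  rintro ⟨σ, hσ, hwin⟩
  obtain ⟨τ, hτ, hτT⟩ := hT.exists_strategy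
  let τ' : V → List V → V := fun w _ => τ w
  obtain ⟨n, w, hw, hwF⟩ :=
    hwin _ (g.isPlay_outcome hσ (τ := τ') (fun w _ => hτ w) v) rfl (g.cons0_outcome v)
  exact hTF.notMem_of_mem_left
    (g.outcome_mem_of_isTrap hT (fun w hw hV0 hs _ => hτT w hw hV0 hs) hσ hv n w hw) hwF

end RGame

/-- Converse boundedness, Zermelo 1927: in a finite-position game, if
for every bound `n` White has no strategy forcing the target within `n` moves from
`p₀`, then White cannot force a win from `p₀` at all. -/
theorem unbounded_implies_no_win {V : Type*} [Fintype V] (g : RGame V) (p0 : V)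
    (h : ∀ n : ℕ, ¬∃ σ : V → List V → V, g.LegalStrat σ ∧
        ∀ p : ℕ → Option V, g.IsPlay p → p 0 = some p0 → g.Cons0 σ p →
          ∃ m ≤ n, ∃ w, p m = some w ∧ w ∈ g.F) :
    ¬g.Win0From p0 := by
  obtain ⟨N, hN⟩ := g.exists_attr_succ_eq
  have hp0 : p0 ∉ g.attr N := fun hp0 => h N (g.win0Within_of_mem_attr hp0)
  exact g.not_win0From_of_isTrap (g.isTrap_compl_attr hN)
    (Set.disjoint_compl_left_iff_subset.2 (g.F_subset_attr N)) hp0
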